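/- arXiv:1003.2044 — 3 statements merged into one kernel-verified Lean document; each statement's English description precedes it below -/
import Mathlib

section
/- Let {x, x₁} be a Bertrand D-pair with constant λ ≠ 0, correspondence s and angle function θ. Then for every s₁ one has s'(s₁) · cos θ(s₁) = 1 − λ k_{g₁}(s₁) and s'(s₁) · sin θ(s₁) = −λ τ_{g₁}(s₁); consequently, whenever 1 − λ k_{g₁}(s₁) ≠ 0 and cos θ(s₁) ≠ 0, tan θ(s₁) = −λ τ_{g₁}(s₁)/(1 − λ k_{g₁}(s₁)). -/
noncomputable section

abbrev E3 := EuclideanSpace ℝ (Fin 3)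

/-- Cross product on `EuclideanSpace ℝ (Fin 3)`. -/
def cross3 (a b : E3) : E3 :=
  WithLp.toLp 2 ![a 1 * b 2 - a 2 * b 1, a 2 * b 0 - a 0 * b 2, a 0 * b 1 - a 1 * b 0]

/-- Darboux frame vector `g = n × T`, where `T = x'`. -/
def gvec (x n : ℝ → E3) : ℝ → E3 := fun t => cross3 (n t) (deriv x t)

/-- Geodesic curvature `k_g = ⟪T', g⟫`. -/
def geodCurv (x n : ℝ → E3) : ℝ → ℝ := fun t => (inner ℝ (deriv (deriv x) t) (gvec x n t) : ℝ)

/-- Normal curvature `k_n = ⟪T', n⟫`. -/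
def normCurv (x n : ℝ → E3) : ℝ → ℝ := fun t => (inner ℝ (deriv (deriv x) t) (n t) : ℝ)

/-- Geodesic torsion `τ_g = ⟪g', n⟫`. -/
def geodTors (x n : ℝ → E3) : ℝ → ℝ := fun t => (inner ℝ (deriv (gvec x n) t) (n t) : ℝ)

/-- A unit-speed smooth curve `x` on an oriented surface, encoded by a smooth unit
normal field `n` along `x` orthogonal to the tangent. -/
def IsDarbouxCurve (x n : ℝ → E3) : Prop :=
  ContDiff ℝ (⊤ : ℕ∞) x ∧ ContDiff ℝ (⊤ : ℕ∞) n ∧ (∀ t, ‖deriv x t‖ = 1) ∧ (∀ t, ‖n t‖ = 1) ∧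
    ∀ t, (inner ℝ (n t) (deriv x t) : ℝ) = 0

/-- `{x, x₁}` is a Bertrand D-pair with constant `lam ≠ 0`, smooth increasing
correspondence `s` and smooth angle function `θ`. -/
def IsBertrandDPair (x n x₁ n₁ : ℝ → E3) (lam : ℝ) (s θ : ℝ → ℝ) : Prop :=
  IsDarbouxCurve x n ∧ IsDarbouxCurve x₁ n₁ ∧ lam ≠ 0 ∧
    ContDiff ℝ (⊤ : ℕ∞) s ∧ (∀ t, 0 < deriv s t) ∧
    (∀ t, x (s t) = x₁ t + lam • gvec x₁ n₁ t) ∧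
    (∀ t, gvec x n (s t) = gvec x₁ n₁ t) ∧
    ContDiff ℝ (⊤ : ℕ∞) θ ∧
    (∀ t, deriv x (s t) = Real.cos (θ t) • deriv x₁ t - Real.sin (θ t) • n₁ t) ∧
    (∀ t, n (s t) = Real.sin (θ t) • deriv x₁ t + Real.cos (θ t) • n₁ t)

lemma contDiff_cross3 : ContDiff ℝ (⊤ : ℕ∞) (fun p : E3 × E3 => cross3 p.1 p.2) := by
  have h1 : ∀ i, ContDiff ℝ (⊤ : ℕ∞) (fun p : E3 × E3 => p.1 i) := fun i =>
    (EuclideanSpace.proj i : E3 →L[ℝ] ℝ).contDiff.comp (contDiff_fst (E := E3) (F := E3))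
  have h2 : ∀ i, ContDiff ℝ (⊤ : ℕ∞) (fun p : E3 × E3 => p.2 i) := fun i =>
    (EuclideanSpace.proj i : E3 →L[ℝ] ℝ).contDiff.comp (contDiff_snd (E := E3) (F := E3))
  rw [contDiff_euclidean]
  intro i
  fin_cases i <;> simp only [cross3, Matrix.cons_val_zero, Matrix.cons_val_one, Matrix.head_cons,
    Matrix.cons_val_two, Matrix.tail_cons, Fin.isValue, PiLp.toLp_apply] <;>
    exact (((h1 _).mul (h2 _)).sub ((h1 _).mul (h2 _)))

lemma inner_cross3_right (a b : E3) : (inner ℝ (cross3 a b) b : ℝ) = 0 := by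
  simp [cross3, PiLp.inner_apply, Fin.sum_univ_three]
  ring

theorem bertrand_D_stmt_1
    (x n x₁ n₁ : ℝ → E3) (lam : ℝ) (s θ : ℝ → ℝ)
    (hpair : IsBertrandDPair x n x₁ n₁ lam s θ) :
    ∀ t, deriv s t * Real.cos (θ t) = 1 - lam * geodCurv x₁ n₁ t ∧
      deriv s t * Real.sin (θ t) = -lam * geodTors x₁ n₁ t ∧
      (1 - lam * geodCurv x₁ n₁ t ≠ 0 → Real.cos (θ t) ≠ 0 →
        Real.tan (θ t) = -lam * geodTors x₁ n₁ t / (1 - lam * geodCurv x₁ n₁ t)) := by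
  obtain ⟨⟨hx, hn, hxu, hnu, hxn⟩, ⟨hx₁, hn₁, hx₁u, hn₁u, hx₁n⟩, hlam, hs, hs', hC, hg, hθ,
    hT, hN⟩ := hpair
  intro t
  set g₁ : ℝ → E3 := gvec x₁ n₁ with hg₁def
  set T₁ : ℝ → E3 := deriv x₁ with hT₁def
  have hT₁c : ContDiff ℝ (⊤ : ℕ∞) T₁ :=
    (contDiff_infty_iff_deriv.mp (hx₁.of_le (by simp))).2
  have hg₁c : ContDiff ℝ (⊤ : ℕ∞) g₁ :=
    (contDiff_cross3.of_le (by simp)).comp ((hn₁.of_le (by simp) : ContDiff ℝ (⊤ : ℕ∞) n₁).prodMk hT₁c)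
  -- derivatives
  have hds : HasDerivAt s (deriv s t) t := ((hs.differentiable (by simp)) t).hasDerivAt
  have hdx : HasDerivAt x (deriv x (s t)) (s t) := ((hx.differentiable (by simp)) (s t)).hasDerivAt
  have hcomp : HasDerivAt (fun u => x (s u)) (deriv s t • deriv x (s t)) t := hdx.scomp t hds
  have hx₁d : HasDerivAt x₁ (T₁ t) t := ((hx₁.differentiable (by simp)) t).hasDerivAt
  have hg₁d : HasDerivAt g₁ (deriv g₁ t) t := ((hg₁c.differentiable (by simp)) t).hasDerivAt
  have hT₁d : HasDerivAt T₁ (deriv T₁ t) t := ((hT₁c.differentiable (by simp)) t).hasDerivAt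
  have hrhs : HasDerivAt (fun u => x₁ u + lam • g₁ u) (T₁ t + lam • deriv g₁ t) t :=
    hx₁d.add (hg₁d.const_smul lam)
  have hcomp' : HasDerivAt (fun u => x (s u)) (T₁ t + lam • deriv g₁ t) t := by
    simp only [hC]; exact hrhs
  have heq : deriv s t • deriv x (s t) = T₁ t + lam • deriv g₁ t := hcomp.unique hcomp'
  rw [hT t] at heq
  -- basic inner products
  have hTT : (inner ℝ (T₁ t) (T₁ t) : ℝ) = 1 := by
    rw [real_inner_self_eq_norm_sq, hx₁u t]; norm_num
  have hnn : (inner ℝ (n₁ t) (n₁ t) : ℝ) = 1 := by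
    rw [real_inner_self_eq_norm_sq, hn₁u t]; norm_num
  have hnT : (inner ℝ (n₁ t) (T₁ t) : ℝ) = 0 := hx₁n t
  have hTn : (inner ℝ (T₁ t) (n₁ t) : ℝ) = 0 := by rw [real_inner_comm]; exact hx₁n t
  -- ⟪g₁', T₁⟫ = -k_g
  have hzero : ∀ u, (inner ℝ (g₁ u) (T₁ u) : ℝ) = 0 := fun u => inner_cross3_right _ _
  have hprod : HasDerivAt (fun u => (inner ℝ (g₁ u) (T₁ u) : ℝ))
      ((inner ℝ (g₁ t) (deriv T₁ t) : ℝ) + (inner ℝ (deriv g₁ t) (T₁ t) : ℝ)) t :=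
    hg₁d.inner ℝ hT₁d
  have hprod0 : HasDerivAt (fun u => (inner ℝ (g₁ u) (T₁ u) : ℝ)) 0 t := by
    simp only [hzero]; exact hasDerivAt_const t 0
  have hsum : (inner ℝ (g₁ t) (deriv T₁ t) : ℝ) + (inner ℝ (deriv g₁ t) (T₁ t) : ℝ) = 0 :=
    hprod.unique hprod0
  have hgT : (inner ℝ (deriv g₁ t) (T₁ t) : ℝ) = -geodCurv x₁ n₁ t := by
    have : geodCurv x₁ n₁ t = (inner ℝ (g₁ t) (deriv T₁ t) : ℝ) := by
      rw [geodCurv, real_inner_comm]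
    linarith [hsum, this.symm.le]
  have hgn : (inner ℝ (deriv g₁ t) (n₁ t) : ℝ) = geodTors x₁ n₁ t := rfl
  -- take inner products of heq with T₁ and n₁
  have e1 : deriv s t * Real.cos (θ t) = 1 - lam * geodCurv x₁ n₁ t := by
    have := congrArg (fun v : E3 => (inner ℝ v (T₁ t) : ℝ)) heq
    simp only [inner_add_left, inner_sub_left, real_inner_smul_left, hTT, hnT, hTn, hgT] at this
    linarith [this]
  have e2 : deriv s t * Real.sin (θ t) = -lam * geodTors x₁ n₁ t := by
    have := congrArg (fun v : E3 => (inner ℝ v (n₁ t) : ℝ)) heq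
    simp only [inner_add_left, inner_sub_left, real_inner_smul_left, hnn, hnT, hTn, hgn] at this
    linarith [this]
  refine ⟨e1, e2, fun h1 h2 => ?_⟩
  have hsne : deriv s t ≠ 0 := ne_of_gt (hs' t)
  rw [Real.tan_eq_sin_div_cos]
  rw [← e1, ← e2]
  field_simp
end
end

section
/- Let {x, x₁} be a Bertrand D-pair with constant λ ≠ 0, correspondence s and angle function θ. Assume both x and x₁ are asymptotic lines (k_n ≡ 0 and k_{n₁} ≡ 0). Then for every s₁ with 1 − λ k_{g₁}(s₁) ≠ 0 one has τ_{g₁}'(s₁) = −λ τ_{g₁}(s₁) k_{g₁}'(s₁)/(1 − λ k_{g₁}(s₁)). -/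
noncomputable section

lemma inner_cross3_left (a b : E3) : (inner ℝ (cross3 a b) a : ℝ) = 0 := by
  simp [cross3, PiLp.inner_apply, Fin.sum_univ_three]
  ring

lemma contDiff_cross3_s3 {f g : ℝ → E3} (hf : ContDiff ℝ (⊤:ℕ∞) f) (hg : ContDiff ℝ (⊤:ℕ∞) g) :
    ContDiff ℝ (⊤:ℕ∞) (fun t => cross3 (f t) (g t)) := by
  have hf' : ∀ i, ContDiff ℝ (⊤:ℕ∞) (fun t => f t i) := fun i => contDiff_euclidean.mp hf i
  have hg' : ∀ i, ContDiff ℝ (⊤:ℕ∞) (fun t => g t i) := fun i => contDiff_euclidean.mp hg i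
  rw [contDiff_euclidean]
  intro i
  fin_cases i <;> simp [cross3] <;>
    exact ContDiff.sub (ContDiff.mul (hf' _) (hg' _)) (ContDiff.mul (hf' _) (hg' _))

lemma inner_deriv_orth {f g : ℝ → E3} (hf : Differentiable ℝ f) (hg : Differentiable ℝ g)
    {c : ℝ} (h : ∀ t, (inner ℝ (f t) (g t) : ℝ) = c) (t : ℝ) :
    (inner ℝ (f t) (deriv g t) : ℝ) + (inner ℝ (deriv f t) (g t) : ℝ) = 0 := by
  have h1 : HasDerivAt (fun u => (inner ℝ (f u) (g u) : ℝ))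
      ((inner ℝ (f t) (deriv g t) : ℝ) + (inner ℝ (deriv f t) (g t) : ℝ)) t :=
    HasDerivAt.inner (𝕜 := ℝ) (hf t).hasDerivAt (hg t).hasDerivAt
  rw [show (fun u => (inner ℝ (f u) (g u) : ℝ)) = fun _ => c from funext h] at h1
  exact h1.unique (hasDerivAt_const t c)

theorem bertrand_D_stmt_3
    (x n x₁ n₁ : ℝ → E3) (lam : ℝ) (s θ : ℝ → ℝ)
    (hpair : IsBertrandDPair x n x₁ n₁ lam s θ)
    (hasym : ∀ t, normCurv x n t = 0) (hasym₁ : ∀ t, normCurv x₁ n₁ t = 0) :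
    ∀ t, 1 - lam * geodCurv x₁ n₁ t ≠ 0 →
      deriv (geodTors x₁ n₁) t = -(lam * geodTors x₁ n₁ t * deriv (geodCurv x₁ n₁) t) / (1 - lam * geodCurv x₁ n₁ t) := by
  obtain ⟨⟨hxC, hnC, hxu, hnu, hxn⟩, ⟨hx₁C, hn₁C, hx₁u, hn₁u, hx₁n⟩, hlam, hsC, hspos,
    hposeq, hgeq, hθC, hTeq, hneq⟩ := hpair
  have hle : ((⊤ : ℕ∞) : WithTop ℕ∞) ≠ 0 := by simp
  -- downgrade smoothness from ω to ∞
  replace hxC : ContDiff ℝ (⊤:ℕ∞) x := hxC.of_le (by simp)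
  replace hnC : ContDiff ℝ (⊤:ℕ∞) n := hnC.of_le (by simp)
  replace hx₁C : ContDiff ℝ (⊤:ℕ∞) x₁ := hx₁C.of_le (by simp)
  replace hn₁C : ContDiff ℝ (⊤:ℕ∞) n₁ := hn₁C.of_le (by simp)
  replace hsC : ContDiff ℝ (⊤:ℕ∞) s := hsC.of_le (by simp)
  replace hθC : ContDiff ℝ (⊤:ℕ∞) θ := hθC.of_le (by simp)
  -- smoothness of derived objects
  have hTC : ContDiff ℝ (⊤:ℕ∞) (deriv x) := (contDiff_infty_iff_deriv.mp hxC).2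
  have hT₁C : ContDiff ℝ (⊤:ℕ∞) (deriv x₁) := (contDiff_infty_iff_deriv.mp hx₁C).2
  have hG₁C : ContDiff ℝ (⊤:ℕ∞) (gvec x₁ n₁) := contDiff_cross3_s3 hn₁C hT₁C
  have hG₁'C : ContDiff ℝ (⊤:ℕ∞) (deriv (gvec x₁ n₁)) := (contDiff_infty_iff_deriv.mp hG₁C).2
  have hT₁'C : ContDiff ℝ (⊤:ℕ∞) (deriv (deriv x₁)) := (contDiff_infty_iff_deriv.mp hT₁C).2
  have hs'C : ContDiff ℝ (⊤:ℕ∞) (deriv s) := (contDiff_infty_iff_deriv.mp hsC).2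
  have hkgC : ContDiff ℝ (⊤:ℕ∞) (geodCurv x₁ n₁) := ContDiff.inner ℝ hT₁'C hG₁C
  have htgC : ContDiff ℝ (⊤:ℕ∞) (geodTors x₁ n₁) := ContDiff.inner ℝ hG₁'C hn₁C
  -- differentiability
  have dx : Differentiable ℝ x := hxC.differentiable hle
  have dn : Differentiable ℝ n := hnC.differentiable hle
  have dx₁ : Differentiable ℝ x₁ := hx₁C.differentiable hle
  have dn₁ : Differentiable ℝ n₁ := hn₁C.differentiable hle
  have ds : Differentiable ℝ s := hsC.differentiable hle
  have dθ : Differentiable ℝ θ := hθC.differentiable hle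
  have dT : Differentiable ℝ (deriv x) := hTC.differentiable hle
  have dT₁ : Differentiable ℝ (deriv x₁) := hT₁C.differentiable hle
  have dG₁ : Differentiable ℝ (gvec x₁ n₁) := hG₁C.differentiable hle
  have ds' : Differentiable ℝ (deriv s) := hs'C.differentiable hle
  have dkg : Differentiable ℝ (geodCurv x₁ n₁) := hkgC.differentiable hle
  have dtg : Differentiable ℝ (geodTors x₁ n₁) := htgC.differentiable hle
  -- basic inner facts
  have f1 : ∀ t, (inner ℝ (deriv x₁ t) (deriv x₁ t) : ℝ) = 1 := by
    intro t; rw [real_inner_self_eq_norm_sq, hx₁u t]; norm_num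
  have f2 : ∀ t, (inner ℝ (n₁ t) (n₁ t) : ℝ) = 1 := by
    intro t; rw [real_inner_self_eq_norm_sq, hn₁u t]; norm_num
  have f3 : ∀ t, (inner ℝ (n₁ t) (deriv x₁ t) : ℝ) = 0 := hx₁n
  have f3' : ∀ t, (inner ℝ (deriv x₁ t) (n₁ t) : ℝ) = 0 := by
    intro t; rw [real_inner_comm]; exact f3 t
  have fG : ∀ t, (inner ℝ (gvec x₁ n₁ t) (deriv x₁ t) : ℝ) = 0 := by
    intro t; exact inner_cross3_right (n₁ t) (deriv x₁ t)
  have f10 : ∀ t, (inner ℝ (deriv (deriv x₁) t) (n₁ t) : ℝ) = 0 := hasym₁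
  have f10' : ∀ t, (inner ℝ (n₁ t) (deriv (deriv x₁) t) : ℝ) = 0 := by
    intro t; rw [real_inner_comm]; exact f10 t
  have f4 : ∀ t, (inner ℝ (deriv (gvec x₁ n₁) t) (deriv x₁ t) : ℝ) = -(geodCurv x₁ n₁ t) := by
    intro t
    have h := inner_deriv_orth dG₁ dT₁ fG t
    have h2 : (inner ℝ (gvec x₁ n₁ t) (deriv (deriv x₁) t) : ℝ) = geodCurv x₁ n₁ t := by
      rw [real_inner_comm]; rfl
    linarith [h, h2]
  have f5 : ∀ t, (inner ℝ (deriv n₁ t) (deriv x₁ t) : ℝ) = 0 := by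
    intro t
    have h := inner_deriv_orth dn₁ dT₁ f3 t
    have h2 := f10' t
    linarith
  have f6 : ∀ t, (inner ℝ (deriv (deriv x₁) t) (deriv x₁ t) : ℝ) = 0 := by
    intro t
    have h := inner_deriv_orth dT₁ dT₁ f1 t
    have h2 : (inner ℝ (deriv x₁ t) (deriv (deriv x₁) t) : ℝ)
        = (inner ℝ (deriv (deriv x₁) t) (deriv x₁ t) : ℝ) := real_inner_comm _ _
    linarith
  have f7 : ∀ t, (inner ℝ (deriv n₁ t) (n₁ t) : ℝ) = 0 := by
    intro t
    have h := inner_deriv_orth dn₁ dn₁ f2 t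
    have h2 : (inner ℝ (n₁ t) (deriv n₁ t) : ℝ) = (inner ℝ (deriv n₁ t) (n₁ t) : ℝ) :=
      real_inner_comm _ _
    linarith
  have f8 : ∀ u, (inner ℝ (deriv n u) (deriv x u) : ℝ) = 0 := by
    intro u
    have h := inner_deriv_orth dn dT hxn u
    have h2 : (inner ℝ (n u) (deriv (deriv x) u) : ℝ) = 0 := by
      rw [real_inner_comm]; exact hasym u
    linarith
  have f9 : ∀ u, (inner ℝ (deriv n u) (n u) : ℝ) = 0 := by
    intro u
    have hc : ∀ v, (inner ℝ (n v) (n v) : ℝ) = 1 := by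
      intro v; rw [real_inner_self_eq_norm_sq, hnu v]; norm_num
    have h := inner_deriv_orth dn dn hc u
    have h2 : (inner ℝ (n u) (deriv n u) : ℝ) = (inner ℝ (deriv n u) (n u) : ℝ) :=
      real_inner_comm _ _
    linarith
  have ftg : ∀ t, (inner ℝ (deriv (gvec x₁ n₁) t) (n₁ t) : ℝ) = geodTors x₁ n₁ t := fun t => rfl
  -- first structure equation: differentiate x (s t) = x₁ t + lam • g₁ t
  have hE1 : ∀ t, deriv s t • deriv x (s t) = deriv x₁ t + lam • deriv (gvec x₁ n₁) t := by
    intro t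
    have hL : HasDerivAt (fun u => x (s u)) (deriv s t • deriv x (s t)) t :=
      HasDerivAt.scomp t (dx (s t)).hasDerivAt (ds t).hasDerivAt
    have hR : HasDerivAt (fun u => x₁ u + lam • gvec x₁ n₁ u)
        (deriv x₁ t + lam • deriv (gvec x₁ n₁) t) t :=
      (dx₁ t).hasDerivAt.add ((dG₁ t).hasDerivAt.const_smul lam)
    rw [show (fun u => x (s u)) = fun u => x₁ u + lam • gvec x₁ n₁ u from funext hposeq] at hL
    exact hL.unique hR
  -- scalar equations A and B
  have hA : ∀ t, deriv s t * Real.cos (θ t) = 1 - lam * geodCurv x₁ n₁ t := by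
    intro t
    have h : (inner ℝ (deriv s t • deriv x (s t)) (deriv x₁ t) : ℝ)
        = (inner ℝ (deriv x₁ t + lam • deriv (gvec x₁ n₁) t) (deriv x₁ t) : ℝ) := by
      rw [hE1 t]
    rw [hTeq t, smul_sub, smul_smul, smul_smul, inner_sub_left, inner_add_left,
      real_inner_smul_left, real_inner_smul_left, real_inner_smul_left,
      f1 t, f3 t, f4 t] at h
    linarith
  have hB : ∀ t, lam * geodTors x₁ n₁ t = -(deriv s t * Real.sin (θ t)) := by
    intro t
    have h : (inner ℝ (deriv s t • deriv x (s t)) (n₁ t) : ℝ)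
        = (inner ℝ (deriv x₁ t + lam • deriv (gvec x₁ n₁) t) (n₁ t) : ℝ) := by
      rw [hE1 t]
    rw [hTeq t, smul_sub, smul_smul, smul_smul, inner_sub_left, inner_add_left,
      real_inner_smul_left, real_inner_smul_left, real_inner_smul_left,
      f2 t, f3' t, ftg t] at h
    linarith
  -- rotation inverses
  have hrot1 : ∀ t, Real.cos (θ t) • deriv x (s t) + Real.sin (θ t) • n (s t) = deriv x₁ t := by
    intro t
    rw [hTeq t, hneq t]
    match_scalars
    all_goals try ring
    all_goals linarith [Real.sin_sq_add_cos_sq (θ t)]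
  have hrot2 : ∀ t, (-Real.sin (θ t)) • deriv x (s t) + Real.cos (θ t) • n (s t) = n₁ t := by
    intro t
    rw [hTeq t, hneq t]
    match_scalars
    all_goals try ring
    all_goals linarith [Real.sin_sq_add_cos_sq (θ t)]
  have hnT : ∀ t, (inner ℝ (deriv n (s t)) (deriv x₁ t) : ℝ) = 0 := by
    intro t
    rw [← hrot1 t, inner_add_right, real_inner_smul_right, real_inner_smul_right,
      f8 (s t), f9 (s t)]
    ring
  have hnN : ∀ t, (inner ℝ (deriv n (s t)) (n₁ t) : ℝ) = 0 := by
    intro t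
    rw [← hrot2 t, inner_add_right, real_inner_smul_right, real_inner_smul_right,
      f8 (s t), f9 (s t)]
    ring
  -- second structure equation: differentiate n (s t) = sin θ • T₁ + cos θ • n₁
  have hE2 : ∀ t, deriv s t • deriv n (s t)
      = (Real.sin (θ t) • deriv (deriv x₁) t + (Real.cos (θ t) * deriv θ t) • deriv x₁ t)
        + (Real.cos (θ t) • deriv n₁ t + (-Real.sin (θ t) * deriv θ t) • n₁ t) := by
    intro t
    have hL : HasDerivAt (fun u => n (s u)) (deriv s t • deriv n (s t)) t :=
      HasDerivAt.scomp t (dn (s t)).hasDerivAt (ds t).hasDerivAt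
    have hsin : HasDerivAt (fun u => Real.sin (θ u)) (Real.cos (θ t) * deriv θ t) t :=
      (Real.hasDerivAt_sin (θ t)).comp t (dθ t).hasDerivAt
    have hcos : HasDerivAt (fun u => Real.cos (θ u)) (-Real.sin (θ t) * deriv θ t) t :=
      (Real.hasDerivAt_cos (θ t)).comp t (dθ t).hasDerivAt
    have hR : HasDerivAt (fun u => Real.sin (θ u) • deriv x₁ u + Real.cos (θ u) • n₁ u)
        ((Real.sin (θ t) • deriv (deriv x₁) t + (Real.cos (θ t) * deriv θ t) • deriv x₁ t)
          + (Real.cos (θ t) • deriv n₁ t + (-Real.sin (θ t) * deriv θ t) • n₁ t)) t :=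
      (hsin.smul (dT₁ t).hasDerivAt).add (hcos.smul (dn₁ t).hasDerivAt)
    rw [show (fun u => n (s u)) = fun u => Real.sin (θ u) • deriv x₁ u + Real.cos (θ u) • n₁ u
      from funext hneq] at hL
    exact hL.unique hR
  -- θ is constant
  have hθ0 : ∀ t, deriv θ t = 0 := by
    intro t
    have h1 : (inner ℝ (deriv s t • deriv n (s t)) (deriv x₁ t) : ℝ)
        = (inner ℝ ((Real.sin (θ t) • deriv (deriv x₁) t + (Real.cos (θ t) * deriv θ t) • deriv x₁ t)
            + (Real.cos (θ t) • deriv n₁ t + (-Real.sin (θ t) * deriv θ t) • n₁ t)) (deriv x₁ t) : ℝ) := by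
      rw [hE2 t]
    have h2 : (inner ℝ (deriv s t • deriv n (s t)) (n₁ t) : ℝ)
        = (inner ℝ ((Real.sin (θ t) • deriv (deriv x₁) t + (Real.cos (θ t) * deriv θ t) • deriv x₁ t)
            + (Real.cos (θ t) • deriv n₁ t + (-Real.sin (θ t) * deriv θ t) • n₁ t)) (n₁ t) : ℝ) := by
      rw [hE2 t]
    simp only [inner_add_left, real_inner_smul_left] at h1 h2
    rw [hnT t, f6 t, f1 t, f5 t, f3 t] at h1
    rw [hnN t, f10 t, f3' t, f7 t, f2 t] at h2
    ring_nf at h1 h2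
    have ha : deriv θ t * Real.cos (θ t) = 0 := by linarith [h1]
    have hb : deriv θ t * Real.sin (θ t) = 0 := by linarith [h2]
    have hsq : deriv θ t ^ 2 = 0 := by
      linear_combination (deriv θ t * Real.cos (θ t)) * ha
        + (deriv θ t * Real.sin (θ t)) * hb - (deriv θ t ^ 2) * Real.sin_sq_add_cos_sq (θ t)
    exact pow_eq_zero_iff (by norm_num) |>.mp hsq
  have hθconst : ∀ t, θ t = θ 0 := fun t => is_const_of_deriv_eq_zero dθ hθ0 t 0
  -- rewrite A and B with constant angle
  have hA' : ∀ t, deriv s t * Real.cos (θ 0) = 1 - lam * geodCurv x₁ n₁ t := by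
    intro t; rw [← hθconst t]; exact hA t
  have hB' : ∀ t, lam * geodTors x₁ n₁ t = -(deriv s t * Real.sin (θ 0)) := by
    intro t; rw [← hθconst t]; exact hB t
  -- differentiate A and B
  intro t hden
  have hdA : deriv (deriv s) t * Real.cos (θ 0) = -(lam * deriv (geodCurv x₁ n₁) t) := by
    have h1 : HasDerivAt (fun u => deriv s u * Real.cos (θ 0))
        (deriv (deriv s) t * Real.cos (θ 0)) t := (ds' t).hasDerivAt.mul_const _
    have h2 : HasDerivAt (fun u => 1 - lam * geodCurv x₁ n₁ u)
        (0 - lam * deriv (geodCurv x₁ n₁) t) t :=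
      (hasDerivAt_const t (1:ℝ)).sub ((dkg t).hasDerivAt.const_mul lam)
    rw [show (fun u => deriv s u * Real.cos (θ 0)) = fun u => 1 - lam * geodCurv x₁ n₁ u
      from funext hA'] at h1
    have := h1.unique h2
    linarith
  have hdB : lam * deriv (geodTors x₁ n₁) t = -(deriv (deriv s) t * Real.sin (θ 0)) := by
    have h1 : HasDerivAt (fun u => lam * geodTors x₁ n₁ u)
        (lam * deriv (geodTors x₁ n₁) t) t := (dtg t).hasDerivAt.const_mul lam
    have h2 : HasDerivAt (fun u => -(deriv s u * Real.sin (θ 0)))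
        (-(deriv (deriv s) t * Real.sin (θ 0))) t := ((ds' t).hasDerivAt.mul_const _).neg
    rw [show (fun u => lam * geodTors x₁ n₁ u) = fun u => -(deriv s u * Real.sin (θ 0))
      from funext hB'] at h1
    exact h1.unique h2
  -- final algebra
  have key : lam * (deriv (geodTors x₁ n₁) t * (1 - lam * geodCurv x₁ n₁ t)
      + lam * geodTors x₁ n₁ t * deriv (geodCurv x₁ n₁) t) = 0 := by
    linear_combination (deriv (deriv s) t * Real.sin (θ 0)) * hA' t
      - (deriv (deriv s) t * Real.cos (θ 0)) * hB' t
      + (lam * geodTors x₁ n₁ t) * hdA + (1 - lam * geodCurv x₁ n₁ t) * hdB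
  have key2 : deriv (geodTors x₁ n₁) t * (1 - lam * geodCurv x₁ n₁ t)
      + lam * geodTors x₁ n₁ t * deriv (geodCurv x₁ n₁) t = 0 := by
    rcases mul_eq_zero.mp key with h | h
    · exact absurd h hlam
    · exact h
  field_simp
  linarith [key2]
end
end

section
/- Let x and x₁ be a Bertrand pair of Frenet curves in ℝ³ with constant λ ≠ 0 and correspondence s, i.e., x(s(s₁)) = x₁(s₁) + λ N₁(s₁) and the principal normals coincide: N(s(s₁)) = N₁(s₁) for all s₁. Then the curvature κ₁ and torsion τ₁ of x₁ satisfy, for every s₁ with 1 − λ κ₁(s₁) ≠ 0, the equation τ₁'(s₁) = −λ κ₁'(s₁) τ₁(s₁)/(1 − λ κ₁(s₁)). -/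
noncomputable section

/-- Curvature `κ = ‖x''‖` of a unit-speed curve. -/
def curvature (x : ℝ → E3) : ℝ → ℝ := fun t => ‖deriv (deriv x) t‖

/-- Principal normal `N = x'' / κ`. -/
def principalNormal (x : ℝ → E3) : ℝ → E3 := fun t => (curvature x t)⁻¹ • deriv (deriv x) t

/-- Binormal `B = T × N`. -/
def binormal (x : ℝ → E3) : ℝ → E3 := fun t => cross3 (deriv x t) (principalNormal x t)

/-- Torsion `τ = ⟪N', B⟫`. -/
def torsion (x : ℝ → E3) : ℝ → ℝ :=
  fun t => (inner ℝ (deriv (principalNormal x) t) (binormal x t) : ℝ)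

/-- A unit-speed smooth curve with nowhere-vanishing second derivative. -/
def IsFrenetCurve (x : ℝ → E3) : Prop :=
  ContDiff ℝ (⊤ : ℕ∞) x ∧ (∀ t, ‖deriv x t‖ = 1) ∧ ∀ t, deriv (deriv x) t ≠ 0

open RealInnerProductSpace Matrix
open scoped ContDiff

section CrossAlgebra

lemma inner3 (a b : E3) : ⟪a, b⟫ = a 0 * b 0 + a 1 * b 1 + a 2 * b 2 := by
  simp [PiLp.inner_apply, Fin.sum_univ_three]; ring

lemma E3ext (a b : E3) (h0 : a 0 = b 0) (h1 : a 1 = b 1) (h2 : a 2 = b 2) : a = b := by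
  ext i; fin_cases i <;> assumption

lemma inner_cross_left (a b : E3) : ⟪cross3 a b, a⟫ = 0 := by
  simp [inner3, cross3, Fin.sum_univ_three]; ring

lemma inner_cross_right (a b : E3) : ⟪cross3 a b, b⟫ = 0 := by
  simp [inner3, cross3, Fin.sum_univ_three]; ring

lemma cross3_smul_left (c : ℝ) (a b : E3) : cross3 (c • a) b = c • cross3 a b := by
  refine E3ext _ _ ?_ ?_ ?_ <;> simp [cross3, PiLp.smul_apply] <;> ring

lemma cross3_smul_right (c : ℝ) (a b : E3) : cross3 a (c • b) = c • cross3 a b := by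
  refine E3ext _ _ ?_ ?_ ?_ <;> simp [cross3, PiLp.smul_apply] <;> ring

lemma cross3_add_right (a b b' : E3) : cross3 a (b + b') = cross3 a b + cross3 a b' := by
  refine E3ext _ _ ?_ ?_ ?_ <;> simp [cross3, PiLp.add_apply] <;> ring

lemma cross3_self (a : E3) : cross3 a a = 0 := by
  refine E3ext _ _ ?_ ?_ ?_ <;> simp [cross3] <;> ring

lemma cross3_triple (a b c : E3) : cross3 a (cross3 b c) = ⟪a,c⟫ • b - ⟪a,b⟫ • c := by
  refine E3ext _ _ ?_ ?_ ?_ <;>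
    simp [cross3, inner3, Fin.sum_univ_three, PiLp.smul_apply, PiLp.sub_apply] <;> ring

lemma triple_cycle (a b c : E3) : ⟪cross3 a b, c⟫ = ⟪cross3 b c, a⟫ := by
  simp [cross3, inner3, Fin.sum_univ_three]; ring

set_option linter.unreachableTactic false in
set_option linter.unusedTactic false in
lemma expand3 (T N v : E3) (hT : ⟪T,T⟫ = 1) (hN : ⟪N,N⟫ = 1) (hTN : ⟪T,N⟫ = 0) :
    v = ⟪v,T⟫ • T + ⟪v,N⟫ • N + ⟪v,cross3 T N⟫ • cross3 T N := by
  rw [inner3] at hT hN hTN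
  set B := cross3 T N with hB
  have hc0 : B 0 = T 1 * N 2 - T 2 * N 1 := rfl
  have hc1 : B 1 = T 2 * N 0 - T 0 * N 2 := rfl
  have hc2 : B 2 = T 0 * N 1 - T 1 * N 0 := rfl
  have h1 : (!![T 0, T 1, T 2; N 0, N 1, N 2; B 0, B 1, B 2] : Matrix (Fin 3) (Fin 3) ℝ) *
      !![T 0, N 0, B 0; T 1, N 1, B 1; T 2, N 2, B 2] = 1 := by
    ext i j
    fin_cases i <;> fin_cases j <;>
      simp [Matrix.mul_apply, Fin.sum_univ_three, Matrix.one_apply, hc0, hc1, hc2] <;>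
      first
        | linear_combination (0:ℝ) * hT
        | linear_combination hT
        | linear_combination hN
        | linear_combination hTN
        | linear_combination
            (N 0 * N 0 + N 1 * N 1 + N 2 * N 2) * hT + hN
              - (T 0 * N 0 + T 1 * N 1 + T 2 * N 2) * hTN
        | linear_combination
            - (N 0 * N 0 + N 1 * N 1 + N 2 * N 2) * hT - hN
              + (T 0 * N 0 + T 1 * N 1 + T 2 * N 2) * hTN
  have h2 := mul_eq_one_comm.mp h1
  have key : ∀ j k : Fin 3, T j * T k + N j * N k + B j * B k = if j = k then 1 else 0 := by
    intro j k
    have h3 := (Matrix.ext_iff.2 h2) j k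
    fin_cases j <;> fin_cases k <;>
      simpa [Matrix.mul_apply, Fin.sum_univ_three, Matrix.one_apply] using h3
  have k00 := key 0 0; have k10 := key 1 0; have k20 := key 2 0
  have k01 := key 0 1; have k11 := key 1 1; have k21 := key 2 1
  have k02 := key 0 2; have k12 := key 1 2; have k22 := key 2 2
  simp only [eq_self_iff_true, if_true,
    eq_false (by decide : ¬((1:Fin 3) = 0)), eq_false (by decide : ¬((2:Fin 3) = 0)),
    eq_false (by decide : ¬((0:Fin 3) = 1)), eq_false (by decide : ¬((2:Fin 3) = 1)),
    eq_false (by decide : ¬((0:Fin 3) = 2)), eq_false (by decide : ¬((1:Fin 3) = 2)),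
    if_false] at k00 k10 k20 k01 k11 k21 k02 k12 k22
  refine E3ext _ _ ?_ ?_ ?_ <;>
    simp only [inner3, PiLp.add_apply, PiLp.smul_apply, smul_eq_mul]
  · linear_combination -(v 0 * k00 + v 1 * k10 + v 2 * k20)
  · linear_combination -(v 0 * k01 + v 1 * k11 + v 2 * k21)
  · linear_combination -(v 0 * k02 + v 1 * k12 + v 2 * k22)

end CrossAlgebra

section DerivInfra

lemma hasDerivAt_coord {u : ℝ → E3} {u' : E3} {t : ℝ} (h : HasDerivAt u u' t) (i : Fin 3) :
    HasDerivAt (fun t => u t i) (u' i) t := by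
  have := ((EuclideanSpace.proj i : E3 →L[ℝ] ℝ)).hasFDerivAt.comp_hasDerivAt t h
  exact this

lemma hasDerivAt_E3 {u : ℝ → E3} {u' : E3} {t : ℝ}
    (h : ∀ i : Fin 3, HasDerivAt (fun t => u t i) (u' i) t) : HasDerivAt u u' t := by
  have h2 : HasDerivAt (fun t => (fun i => u t i : Fin 3 → ℝ)) (fun i => u' i) t :=
    hasDerivAt_pi.mpr h
  exact ((EuclideanSpace.equiv (Fin 3) ℝ).symm :
    (Fin 3 → ℝ) →L[ℝ] E3).hasFDerivAt.comp_hasDerivAt t h2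

lemma hasDerivAt_cross {u v : ℝ → E3} {u' v' : E3} {t : ℝ}
    (hu : HasDerivAt u u' t) (hv : HasDerivAt v v' t) :
    HasDerivAt (fun t => cross3 (u t) (v t)) (cross3 u' (v t) + cross3 (u t) v') t := by
  apply hasDerivAt_E3
  intro i
  have h0u := hasDerivAt_coord hu 0; have h1u := hasDerivAt_coord hu 1
  have h2u := hasDerivAt_coord hu 2
  have h0v := hasDerivAt_coord hv 0; have h1v := hasDerivAt_coord hv 1
  have h2v := hasDerivAt_coord hv 2
  fin_cases i
  · exact ((h1u.mul h2v).add (h2u.mul h1v).neg).congr_deriv (by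
      show _ = (u' 1 * v t 2 - u' 2 * v t 1) + (u t 1 * v' 2 - u t 2 * v' 1); ring)
  · exact ((h2u.mul h0v).add (h0u.mul h2v).neg).congr_deriv (by
      show _ = (u' 2 * v t 0 - u' 0 * v t 2) + (u t 2 * v' 0 - u t 0 * v' 2); ring)
  · exact ((h0u.mul h1v).add (h1u.mul h0v).neg).congr_deriv (by
      show _ = (u' 0 * v t 1 - u' 1 * v t 0) + (u t 0 * v' 1 - u t 1 * v' 0); ring)

end DerivInfra

section Frenet

variable {x : ℝ → E3}

lemma fc_contDiff_T (hx : IsFrenetCurve x) : ContDiff ℝ ∞ (deriv x) :=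
  (contDiff_infty_iff_deriv.mp (hx.1.of_le (by simp))).2

lemma fc_contDiff_A (hx : IsFrenetCurve x) : ContDiff ℝ ∞ (deriv (deriv x)) :=
  (contDiff_infty_iff_deriv.mp (fc_contDiff_T hx)).2

lemma fc_kappa_pos (hx : IsFrenetCurve x) (t : ℝ) : 0 < curvature x t := norm_pos_iff.mpr (hx.2.2 t)

lemma fc_contDiff_curvature (hx : IsFrenetCurve x) : ContDiff ℝ ∞ (curvature x) :=
  (fc_contDiff_A hx).norm ℝ hx.2.2

lemma fc_contDiff_N (hx : IsFrenetCurve x) : ContDiff ℝ ∞ (principalNormal x) :=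
  (((fc_contDiff_curvature hx).inv fun t => (fc_kappa_pos hx t).ne').smul (fc_contDiff_A hx))

lemma fc_A_eq (hx : IsFrenetCurve x) (t : ℝ) : deriv (deriv x) t = curvature x t • principalNormal x t := by
  rw [principalNormal, smul_smul, mul_inv_cancel₀ (fc_kappa_pos hx t).ne', one_smul]

lemma fc_inner_TT (hx : IsFrenetCurve x) (t : ℝ) : ⟪deriv x t, deriv x t⟫ = 1 := by
  rw [real_inner_self_eq_norm_sq, hx.2.1 t]; norm_num

lemma fc_inner_AT (hx : IsFrenetCurve x) (t : ℝ) : ⟪deriv (deriv x) t, deriv x t⟫ = 0 := by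
  have hdiff : ∀ u, DifferentiableAt ℝ (deriv x) u :=
    fun u => ((fc_contDiff_T hx).differentiable (by norm_num)).differentiableAt
  have hconst : (fun u => (⟪deriv x u, deriv x u⟫ : ℝ)) = fun _ => (1:ℝ) :=
    funext fun u => fc_inner_TT hx u
  have h0 : deriv (fun u => (⟪deriv x u, deriv x u⟫ : ℝ)) t = 0 := by
    rw [hconst]; simp
  rw [deriv_inner_apply (𝕜 := ℝ) (hdiff t) (hdiff t)] at h0
  rw [real_inner_comm] at h0
  linarith [h0]

lemma fc_inner_NT (hx : IsFrenetCurve x) (t : ℝ) : ⟪principalNormal x t, deriv x t⟫ = 0 := by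
  rw [principalNormal, real_inner_smul_left, fc_inner_AT hx t, mul_zero]

lemma fc_inner_NN (hx : IsFrenetCurve x) (t : ℝ) : ⟪principalNormal x t, principalNormal x t⟫ = 1 := by
  rw [principalNormal, real_inner_smul_left, real_inner_smul_right,
    real_inner_self_eq_norm_sq]
  have h := (fc_kappa_pos hx t).ne'
  have : ‖deriv (deriv x) t‖ = curvature x t := rfl
  rw [this]
  field_simp

lemma fc_diff_N (hx : IsFrenetCurve x) : Differentiable ℝ (principalNormal x) :=
  (fc_contDiff_N hx).differentiable (by norm_num)

lemma fc_inner_N'T (hx : IsFrenetCurve x) (t : ℝ) : ⟪deriv (principalNormal x) t, deriv x t⟫ = -curvature x t := by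
  have hdiffN := fc_diff_N hx
  have hdiffT := (fc_contDiff_T hx).differentiable (by norm_num)
  have hconst : (fun u => (⟪principalNormal x u, deriv x u⟫ : ℝ)) = fun _ => (0:ℝ) :=
    funext fun u => fc_inner_NT hx u
  have h0 : deriv (fun u => (⟪principalNormal x u, deriv x u⟫ : ℝ)) t = 0 := by
    rw [hconst]; simp
  rw [deriv_inner_apply (𝕜 := ℝ) (hdiffN t) (hdiffT t)] at h0
  have hA : ⟪principalNormal x t, deriv (deriv x) t⟫ = curvature x t := by
    rw [fc_A_eq hx t, real_inner_smul_right, fc_inner_NN hx t, mul_one]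
  rw [hA] at h0
  linarith [h0]

lemma fc_inner_N'N (hx : IsFrenetCurve x) (t : ℝ) : ⟪deriv (principalNormal x) t, principalNormal x t⟫ = 0 := by
  have hdiffN := fc_diff_N hx
  have hconst : (fun u => (⟪principalNormal x u, principalNormal x u⟫ : ℝ)) = fun _ => (1:ℝ) :=
    funext fun u => fc_inner_NN hx u
  have h0 : deriv (fun u => (⟪principalNormal x u, principalNormal x u⟫ : ℝ)) t = 0 := by
    rw [hconst]; simp
  rw [deriv_inner_apply (𝕜 := ℝ) (hdiffN t) (hdiffN t)] at h0
  rw [real_inner_comm] at h0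
  linarith [h0]

/-- Frenet: N' = -κ T + τ B. -/
lemma fc_N'_eq (hx : IsFrenetCurve x) (t : ℝ) : deriv (principalNormal x) t =
    (-curvature x t) • deriv x t + torsion x t • binormal x t := by
  have h := expand3 (deriv x t) (principalNormal x t) (deriv (principalNormal x) t)
    (fc_inner_TT hx t) (fc_inner_NN hx t)
    (by rw [real_inner_comm]; exact fc_inner_NT hx t)
  have hB : binormal x t = cross3 (deriv x t) (principalNormal x t) := rfl
  rw [← hB] at h
  rw [fc_inner_N'T hx t, fc_inner_N'N hx t] at h
  have hτ : (⟪deriv (principalNormal x) t, binormal x t⟫ : ℝ) = torsion x t := rfl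
  rw [hτ] at h
  rw [h]; module

end Frenet

theorem bertrand_stmt_5 (x x₁ : ℝ → E3) (lam : ℝ) (s : ℝ → ℝ)
    (hx : IsFrenetCurve x) (hx₁ : IsFrenetCurve x₁) (hlam : lam ≠ 0)
    (hs : ContDiff ℝ (⊤ : ℕ∞) s) (hs' : ∀ t, 0 < deriv s t)
    (hoff : ∀ t, x (s t) = x₁ t + lam • principalNormal x₁ t)
    (hN : ∀ t, principalNormal x (s t) = principalNormal x₁ t) :
    ∀ t, 1 - lam * curvature x₁ t ≠ 0 →
      deriv (torsion x₁) t =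
        -(lam * deriv (curvature x₁) t * torsion x₁ t) / (1 - lam * curvature x₁ t) := by
  intro t₀ hden
  have hdiffx : Differentiable ℝ x := hx.1.differentiable (by norm_num)
  have hdiffx₁ : Differentiable ℝ x₁ := hx₁.1.differentiable (by norm_num)
  have hdiffT : Differentiable ℝ (deriv x) := (fc_contDiff_T hx).differentiable (by norm_num)
  have hdiffT₁ : Differentiable ℝ (deriv x₁) := (fc_contDiff_T hx₁).differentiable (by norm_num)
  have hdiffN₁ : Differentiable ℝ (principalNormal x₁) := fc_diff_N hx₁
  have hdiffs : Differentiable ℝ s := hs.differentiable (by norm_num)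
  have hdBcross : ∀ t, HasDerivAt (binormal x₁)
      (cross3 (deriv (deriv x₁) t) (principalNormal x₁ t) +
        cross3 (deriv x₁ t) (deriv (principalNormal x₁) t)) t := by
    intro t
    exact hasDerivAt_cross (hdiffT₁ t).hasDerivAt (hdiffN₁ t).hasDerivAt
  have hdiffB₁ : Differentiable ℝ (binormal x₁) := fun t => (hdBcross t).differentiableAt
  -- binormal algebra
  have hTB : ∀ t, cross3 (deriv x₁ t) (binormal x₁ t) = -principalNormal x₁ t := by
    intro t
    have h3 := cross3_triple (deriv x₁ t) (deriv x₁ t) (principalNormal x₁ t)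
    show cross3 (deriv x₁ t) (cross3 (deriv x₁ t) (principalNormal x₁ t)) = _
    rw [h3, fc_inner_TT hx₁ t, real_inner_comm, fc_inner_NT hx₁ t]
    module
  have hNB : ∀ t, cross3 (principalNormal x₁ t) (binormal x₁ t) = deriv x₁ t := by
    intro t
    have h3 := cross3_triple (principalNormal x₁ t) (deriv x₁ t) (principalNormal x₁ t)
    show cross3 (principalNormal x₁ t) (cross3 (deriv x₁ t) (principalNormal x₁ t)) = _
    rw [h3, fc_inner_NN hx₁ t, fc_inner_NT hx₁ t]
    module
  have hBB : ∀ t, (⟪binormal x₁ t, binormal x₁ t⟫ : ℝ) = 1 := by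
    intro t
    have h4 : (⟪binormal x₁ t, binormal x₁ t⟫ : ℝ) =
        ⟪cross3 (deriv x₁ t) (principalNormal x₁ t), binormal x₁ t⟫ := rfl
    rw [h4, triple_cycle, hNB t, fc_inner_TT hx₁ t]
  have hinTB : ∀ t, (⟪deriv x₁ t, binormal x₁ t⟫ : ℝ) = 0 := by
    intro t; rw [real_inner_comm]; exact inner_cross_left _ _
  have hinBT : ∀ t, (⟪binormal x₁ t, deriv x₁ t⟫ : ℝ) = 0 := fun t => inner_cross_left _ _
  have hinNB : ∀ t, (⟪principalNormal x₁ t, binormal x₁ t⟫ : ℝ) = 0 := by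
    intro t; rw [real_inner_comm]; exact inner_cross_right _ _
  -- chain rule facts
  have hTc_deriv : ∀ t, deriv (fun u => x (s u)) t = deriv s t • deriv x (s t) := by
    intro t
    have h := deriv.scomp t (hdiffx (s t)) (hdiffs t)
    simpa [Function.comp_def] using h
  have hTc2_deriv : ∀ t, deriv (fun u => deriv x (s u)) t
      = deriv s t • deriv (deriv x) (s t) := by
    intro t
    have h := deriv.scomp t (hdiffT (s t)) (hdiffs t)
    simpa [Function.comp_def] using h
  have hdiffTc : Differentiable ℝ (fun u => deriv x (s u)) := hdiffT.comp hdiffs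
  -- step 1
  have key1 : ∀ t, deriv s t • deriv x (s t) =
      (1 - lam * curvature x₁ t) • deriv x₁ t + (lam * torsion x₁ t) • binormal x₁ t := by
    intro t
    have hfun : (fun u => x (s u)) = fun u => x₁ u + lam • principalNormal x₁ u := funext hoff
    have hrhs : deriv (fun u => x₁ u + lam • principalNormal x₁ u) t =
        deriv x₁ t + lam • deriv (principalNormal x₁) t := by
      rw [show (fun u => x₁ u + lam • principalNormal x₁ u) = x₁ + lam • principalNormal x₁ from rfl,
        deriv_add (hdiffx₁ t) ((hdiffN₁ t).const_smul lam)]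
      congr 1
      exact deriv_const_smul lam (hdiffN₁ t)
    have h1 : deriv s t • deriv x (s t) = deriv x₁ t + lam • deriv (principalNormal x₁) t := by
      rw [← hTc_deriv t, hfun, hrhs]
    rw [h1, fc_N'_eq hx₁ t]
    module
  -- inner products of key1 with T₁ and B₁
  have hfval : ∀ t, deriv s t * (⟪deriv x (s t), deriv x₁ t⟫ : ℝ)
      = 1 - lam * curvature x₁ t := by
    intro t
    have h := congrArg (fun v => (⟪v, deriv x₁ t⟫ : ℝ)) (key1 t)
    simp only [real_inner_smul_left, inner_add_left] at h
    rw [fc_inner_TT hx₁ t, hinBT t] at h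
    simpa using h
  have hgval : ∀ t, deriv s t * (⟪deriv x (s t), binormal x₁ t⟫ : ℝ)
      = lam * torsion x₁ t := by
    intro t
    have h := congrArg (fun v => (⟪v, binormal x₁ t⟫ : ℝ)) (key1 t)
    simp only [real_inner_smul_left, inner_add_left] at h
    rw [hinTB t, hBB t] at h
    simpa using h
  -- f and g have zero derivative
  have hTcN : ∀ t, (⟪deriv x (s t), principalNormal x₁ t⟫ : ℝ) = 0 := by
    intro t
    rw [← hN t, real_inner_comm]
    exact fc_inner_NT hx (s t)
  have hAT : ∀ t, (⟪deriv (deriv x) (s t), deriv x₁ t⟫ : ℝ) = 0 := by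
    intro t
    rw [fc_A_eq hx (s t), hN t, real_inner_smul_left, fc_inner_NT hx₁ t, mul_zero]
  have hAB : ∀ t, (⟪deriv (deriv x) (s t), binormal x₁ t⟫ : ℝ) = 0 := by
    intro t
    rw [fc_A_eq hx (s t), hN t, real_inner_smul_left, hinNB t, mul_zero]
  have hf0 : ∀ t, deriv (fun u => (⟪deriv x (s u), deriv x₁ u⟫ : ℝ)) t = 0 := by
    intro t
    rw [deriv_inner_apply (𝕜 := ℝ) (hdiffTc t) (hdiffT₁ t), hTc2_deriv t,
      real_inner_smul_left, hAT t, fc_A_eq hx₁ t, real_inner_smul_right, hTcN t]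
    ring
  have hdB₁ : ∀ t, deriv (binormal x₁) t = (- torsion x₁ t) • principalNormal x₁ t := by
    intro t
    rw [(hdBcross t).deriv, fc_A_eq hx₁ t, fc_N'_eq hx₁ t, cross3_smul_left, cross3_self,
      cross3_add_right, cross3_smul_right, cross3_smul_right, cross3_self]
    rw [show cross3 (deriv x₁ t) (binormal x₁ t) = -principalNormal x₁ t from hTB t]
    module
  have hg0 : ∀ t, deriv (fun u => (⟪deriv x (s u), binormal x₁ u⟫ : ℝ)) t = 0 := by
    intro t
    rw [deriv_inner_apply (𝕜 := ℝ) (hdiffTc t) (hdiffB₁ t), hTc2_deriv t,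
      real_inner_smul_left, hAB t, hdB₁ t, real_inner_smul_right, hTcN t]
    ring
  -- constancy
  have hfc : ∀ t, (⟪deriv x (s t), deriv x₁ t⟫ : ℝ) = ⟪deriv x (s t₀), deriv x₁ t₀⟫ := by
    intro t
    exact is_const_of_deriv_eq_zero (fun u => ((hdiffTc u).inner ℝ (hdiffT₁ u))) hf0 t t₀
  have hgc : ∀ t, (⟪deriv x (s t), binormal x₁ t⟫ : ℝ) = ⟪deriv x (s t₀), binormal x₁ t₀⟫ := by
    intro t
    exact is_const_of_deriv_eq_zero (fun u => ((hdiffTc u).inner ℝ (hdiffB₁ u))) hg0 t t₀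
  obtain ⟨F, hF⟩ : ∃ F : ℝ, (⟪deriv x (s t₀), deriv x₁ t₀⟫ : ℝ) = F := ⟨_, rfl⟩
  obtain ⟨G, hG⟩ : ∃ G : ℝ, (⟪deriv x (s t₀), binormal x₁ t₀⟫ : ℝ) = G := ⟨_, rfl⟩
  rw [hF] at hfc
  rw [hG] at hgc
  have hFne : F ≠ 0 := by
    intro h0
    have h1 := hfval t₀
    rw [hfc t₀, h0, mul_zero] at h1
    exact hden h1.symm
  -- the linear relation lam τ₁ = (G/F) (1 - lam κ₁)
  have hlin : ∀ t, lam * torsion x₁ t * F = G * (1 - lam * curvature x₁ t) := by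
    intro t
    have h1 := hfval t; have h2 := hgval t
    rw [hfc t] at h1
    rw [hgc t] at h2
    linear_combination G * h1 - F * h2
  have hτfun : torsion x₁ = fun t => (G / (F * lam)) * (1 - lam * curvature x₁ t) := by
    funext t
    have h := hlin t
    field_simp
    linear_combination h
  have hdκ : DifferentiableAt ℝ (curvature x₁) t₀ :=
    ((fc_contDiff_curvature hx₁).differentiable (by norm_num)) t₀
  have H : HasDerivAt (fun t => (G / (F * lam)) * (1 - lam * curvature x₁ t))
      ((G / (F * lam)) * (-(lam * deriv (curvature x₁) t₀))) t₀ := by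
    have h1 : HasDerivAt (fun t => lam * curvature x₁ t) (lam * deriv (curvature x₁) t₀) t₀ :=
      hdκ.hasDerivAt.const_mul lam
    have h2 := h1.const_sub 1
    exact h2.const_mul _
  have hderivτ : deriv (torsion x₁) t₀ = (G / (F * lam)) * (-(lam * deriv (curvature x₁) t₀)) := by
    rw [hτfun]
    exact H.deriv
  have hτ0 : torsion x₁ t₀ = (G / (F * lam)) * (1 - lam * curvature x₁ t₀) :=
    congrFun hτfun t₀
  rw [hderivτ, hτ0]
  field_simp
end
end
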